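/- A hypothesis MDP derived from a closed and consistent exact observation table is consistent with the table: for every s ∈ S ∪ Lt(S) and e ∈ E, T(s·e) = H(s·e), where H is the hypothesis semantics. -/

import Mathlib

open scoped ENNReal Classical
open MeasureTheory

/-- Traces: alternating output-input sequences starting and ending with an output. -/
abbrev Trace (I O : Type*) := O × List (I × O)
/-- Test sequences: alternating output-input sequences starting with an output, ending with an input. -/
abbrev TS (I O : Type*) := List (O × I)
/-- Continuation sequences: start and end with an input. -/
abbrev CS (I O : Type*) := I × List (O × I)

/-- Deterministic labelled Markov decision process. -/
structure DetMDP (Q I O : Type*) where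
  q0 : Q
  trans : Q → I → Q → ℝ≥0∞
  lab : Q → O
  sum_one : ∀ q i, ∑' q', trans q i q' = 1
  det : ∀ q i q' q'', 0 < trans q i q' → 0 < trans q i q'' → lab q' = lab q'' → q' = q''

namespace DetMDP

variable {Q I O : Type*}

/-- Δ: unique successor with positive probability and matching label, if any. -/
noncomputable def step (M : DetMDP Q I O) (q : Q) (i : I) (o : O) : Option Q :=
  if h : ∃ q', 0 < M.trans q i q' ∧ M.lab q' = o then some h.choose else none

noncomputable def run (M : DetMDP Q I O) : Option Q → List (I × O) → Option Q
  | oq, [] => oq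
  | some q, (i, o) :: rest => M.run (M.step q i o) rest
  | none, _ :: _ => none

/-- δ*: the state reached by a trace, `none` if the trace is not observable. -/
noncomputable def dstar (M : DetMDP Q I O) (t : Trace I O) : Option Q :=
  if M.lab M.q0 = t.1 then M.run (some M.q0) t.2 else none

/-- Distribution over outputs after executing input `i` in state `q`. -/
noncomputable def outDist (M : DetMDP Q I O) (q : Q) (i : I) : O → ℝ≥0∞ :=
  fun o => ∑' q', if M.lab q' = o then M.trans q i q' else 0

end DetMDP

/-- Split a nonempty test sequence into its trace part and final input. -/
def tsSplit {I O : Type*} : O → I → TS I O → Trace I O × I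
  | o, i, [] => ((o, []), i)
  | o, i, (o', i') :: rest =>
    let p := tsSplit o' i' rest
    ((o, (i, p.1.1) :: p.1.2), p.2)

namespace DetMDP

variable {Q I O : Type*}

/-- The semantics of a deterministic labelled MDP: a partial map from test
sequences to output distributions. -/
noncomputable def sem (M : DetMDP Q I O) : TS I O → Option (O → ℝ≥0∞)
  | [] => some (fun o => if M.lab M.q0 = o then 1 else 0)
  | (o, i) :: rest =>
    let p := tsSplit o i rest
    match M.dstar p.1 with
    | none => none
    | some q => some (M.outDist q p.2)

/-- Probability of observing the output part of a trace suffix from a state. -/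
noncomputable def traceProb (M : DetMDP Q I O) : Option Q → List (I × O) → ℝ≥0∞
  | none, _ => 0
  | some _, [] => 1
  | some q, (i, o) :: rest => M.outDist q i o * M.traceProb (M.step q i o) rest

end DetMDP

def traceInputAux {I O : Type*} : O → List (I × O) → I → TS I O
  | o, [], i => [(o, i)]
  | o, (i', o') :: rest, i => (o, i') :: traceInputAux o' rest i

/-- The test sequence `t · i`. -/
def traceInput {I O : Type*} (t : Trace I O) (i : I) : TS I O := traceInputAux t.1 t.2 i

/-- The test sequence `t · e` for a continuation sequence `e`. -/
def traceCS {I O : Type*} (t : Trace I O) (e : CS I O) : TS I O := traceInput t e.1 ++ e.2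

/-- The trace `t · i · o`. -/
def extT {I O : Type*} (t : Trace I O) (i : I) (o : O) : Trace I O := (t.1, t.2 ++ [(i, o)])

/-- The last output of a trace. -/
def lastOut {I O : Type*} (t : Trace I O) : O := ((t.2.getLast?).map Prod.snd).getD t.1

/-- Trace prefix relation. -/
def tracePrefix {I O : Type*} (t t' : Trace I O) : Prop := t.1 = t'.1 ∧ t.2 <+: t'.2

/-- `f(s)(o)` read off a partial semantics function (0 when undefined). -/
def probOf {I O : Type*} (f : TS I O → Option (O → ℝ≥0∞)) (s : TS I O) (o : O) : ℝ≥0∞ :=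
  ((f s).getD fun _ => 0) o

/-- M-equivalence of traces. -/
def MEq {I O : Type*} (f : TS I O → Option (O → ℝ≥0∞)) (t1 t2 : Trace I O) : Prop :=
  lastOut t1 = lastOut t2 ∧ ∀ e : CS I O, f (traceCS t1 e) = f (traceCS t2 e)

/-- Row of a trace in an observation table with column labels `E`. -/
noncomputable def rowOn {I O : Type*} (E : Set (CS I O)) (f : TS I O → Option (O → ℝ≥0∞)) (t : Trace I O) :
    CS I O → Option (O → ℝ≥0∞) :=
  fun e => if e ∈ E then f (traceCS t e) else none

/-- Row equivalence `eqRow_E`. -/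
def eqRow {I O : Type*} (E : Set (CS I O)) (f : TS I O → Option (O → ℝ≥0∞))
    (t1 t2 : Trace I O) : Prop :=
  lastOut t1 = lastOut t2 ∧ rowOn E f t1 = rowOn E f t2

/-- Membership in `Lt(S)`: observable one-step extensions of short traces. -/
def inLt {I O : Type*} (f : TS I O → Option (O → ℝ≥0∞)) (S : Set (Trace I O))
    (t : Trace I O) : Prop :=
  ∃ s ∈ S, ∃ i o, t = extT s i o ∧ 0 < probOf f (traceInput s i) o

/-- Closedness of an observation table. -/
def ClosedTable {I O : Type*} (E : Set (CS I O)) (f : TS I O → Option (O → ℝ≥0∞))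
    (S : Set (Trace I O)) : Prop :=
  ∀ l, inLt f S l → ∃ s ∈ S, eqRow E f l s

/-- Consistency of an observation table. -/
def ConsistentTable {I O : Type*} (E : Set (CS I O)) (f : TS I O → Option (O → ℝ≥0∞))
    (S : Set (Trace I O)) : Prop :=
  ∀ s1 ∈ S, ∀ s2 ∈ S, eqRow E f s1 s2 → ∀ i o,
    (probOf f (traceInput s1 i) o = 0 ∧ probOf f (traceInput s2 i) o = 0) ∨
      eqRow E f (extT s1 i o) (extT s2 i o)

/-- The hypothesis state `⟨last(s), row(s)⟩` associated with a trace. -/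
noncomputable def stateOf {I O : Type*} (E : Set (CS I O)) (f : TS I O → Option (O → ℝ≥0∞))
    (t : Trace I O) : O × (CS I O → Option (O → ℝ≥0∞)) :=
  (lastOut t, rowOn E f t)

/-! A short trace `s ∈ S` reaches the hypothesis state `stateOf s = ⟨last(s), row(s)⟩`: the
transition of `H` out of `stateOf s` under `i` puts the mass `T(s·i)(o)` on `stateOf (s·i·o)`
and nothing elsewhere, so `H` reproduces `T(s·i)` there. Closedness maps every observable
extension `s·i·o` to a short trace with the same state and the same row, so the agreement
`T(s·e) = H(s·e)` propagates along the letters of `e`, using that `E` is suffix-closed. -/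

section Semantics

variable {Q I O : Type*}

lemma tsSplit_traceInputAux (l : List (I × O)) (o : O) (i : I) :
    ∃ p rest, traceInputAux o l i = p :: rest ∧ tsSplit p.1 p.2 rest = ((o, l), i) := by
  induction l generalizing o with
  | nil => exact ⟨(o, i), [], rfl, rfl⟩
  | cons x l ih =>
    obtain ⟨i', o'⟩ := x
    obtain ⟨⟨p1, p2⟩, rest, h1, h2⟩ := ih o'
    exact ⟨(o, i'), traceInputAux o' l i, rfl, by simp [h1, tsSplit, h2]⟩

lemma traceInputAux_append (l : List (I × O)) (o : O) (i : I) (o' : O) (i' : I) :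
    traceInputAux o (l ++ [(i, o')]) i' = traceInputAux o l i ++ [(o', i')] := by
  induction l generalizing o with
  | nil => rfl
  | cons x l ih => simp [traceInputAux, ih]

lemma traceCS_nil (t : Trace I O) (i : I) : traceCS t (i, []) = traceInput t i :=
  List.append_nil _

lemma traceCS_cons (t : Trace I O) (i : I) (o : O) (i' : I) (l : List (O × I)) :
    traceCS t (i, (o, i') :: l) = traceCS (extT t i o) (i', l) := by
  simp [traceCS, traceInput, extT, traceInputAux_append]

lemma lastOut_extT (t : Trace I O) (i : I) (o : O) : lastOut (extT t i o) = o := by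
  simp [lastOut, extT]

namespace DetMDP

variable (N : DetMDP Q I O)

lemma run_none (l : List (I × O)) : N.run none l = none := by
  cases l <;> rfl

lemma run_append (l₁ l₂ : List (I × O)) (oq : Option Q) :
    N.run oq (l₁ ++ l₂) = N.run (N.run oq l₁) l₂ := by
  induction l₁ generalizing oq with
  | nil => cases oq <;> rfl
  | cons p l ih =>
    cases oq with
    | none => simp [run, run_none]
    | some q => simpa [run] using ih _

lemma dstar_extT (t : Trace I O) (i : I) (o : O) :
    N.dstar (extT t i o) = (N.dstar t).bind (N.step · i o) := by
  unfold dstar extT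
  split_ifs
  · rw [run_append]
    cases N.run (some N.q0) t.2 <;> rfl
  · rfl

lemma lab_q0_eq_of_dstar_ne_none {t : Trace I O} (h : N.dstar t ≠ none) : N.lab N.q0 = t.1 := by
  by_contra hne
  exact h (if_neg hne)

lemma step_eq_some {q q' : Q} {i : I} (h : 0 < N.trans q i q') :
    N.step q i (N.lab q') = some q' := by
  have hex : ∃ r, 0 < N.trans q i r ∧ N.lab r = N.lab q' := ⟨q', h, rfl⟩
  rw [step, dif_pos hex]
  exact congrArg some (N.det q i _ _ hex.choose_spec.1 h hex.choose_spec.2)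

lemma step_eq_none_iff {q : Q} {i : I} {o : O} : N.step q i o = none ↔ N.outDist q i o = 0 := by
  simp only [step, dite_eq_right_iff, reduceCtorEq, imp_false, not_exists, not_and, outDist,
    ENNReal.tsum_eq_zero, ite_eq_right_iff, pos_iff_ne_zero, not_imp_not]

lemma sem_traceInput (t : Trace I O) (i : I) :
    N.sem (traceInput t i) = (N.dstar t).map (N.outDist · i) := by
  obtain ⟨⟨p1, p2⟩, rest, h1, h2⟩ := tsSplit_traceInputAux t.2 t.1 i
  rw [traceInput, h1]
  simp only [sem, h2]
  cases N.dstar t <;> rfl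

lemma probOf_sem_traceInput {t : Trace I O} {q : Q} (h : N.dstar t = some q) (i : I) :
    probOf N.sem (traceInput t i) = N.outDist q i := by
  funext o
  simp [probOf, sem_traceInput, h]

lemma dstar_extT_eq_none_iff (t : Trace I O) (i : I) (o : O) :
    N.dstar (extT t i o) = none ↔ probOf N.sem (traceInput t i) o = 0 := by
  rw [dstar_extT]
  cases h : N.dstar t with
  | none => simp [probOf, sem_traceInput, h]
  | some q => rw [Option.bind_some, probOf_sem_traceInput N h, step_eq_none_iff]

lemma sem_traceCS_congr {t₁ t₂ : Trace I O} (h : N.dstar t₁ = N.dstar t₂) (e : CS I O) :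
    N.sem (traceCS t₁ e) = N.sem (traceCS t₂ e) := by
  obtain ⟨i, l⟩ := e
  induction l generalizing t₁ t₂ i with
  | nil => rw [traceCS_nil, traceCS_nil, sem_traceInput, sem_traceInput, h]
  | cons x l ih =>
    rw [traceCS_cons, traceCS_cons]
    exact ih (by rw [dstar_extT, dstar_extT, h]) _

lemma sem_traceCS_of_dstar_eq_none {t : Trace I O} (h : N.dstar t = none) (e : CS I O) :
    N.sem (traceCS t e) = none := by
  obtain ⟨i, l⟩ := e
  induction l generalizing t i with
  | nil => rw [traceCS_nil, sem_traceInput, h, Option.map_none]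
  | cons x l ih =>
    rw [traceCS_cons]
    exact ih (by rw [dstar_extT, h, Option.bind_none]) _

end DetMDP

end Semantics

lemma stateOf_eq_of_eqRow {I O : Type*} {E : Set (CS I O)} {f : TS I O → Option (O → ℝ≥0∞)}
    {t₁ t₂ : Trace I O} (h : eqRow E f t₁ t₂) : stateOf E f t₁ = stateOf E f t₂ :=
  Prod.ext h.1 h.2

lemma eqRow.apply_traceCS_eq {I O : Type*} {E : Set (CS I O)} {f : TS I O → Option (O → ℝ≥0∞)}
    {t₁ t₂ : Trace I O} (h : eqRow E f t₁ t₂) {e : CS I O} (he : e ∈ E) :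
    f (traceCS t₁ e) = f (traceCS t₂ e) := by
  simpa [rowOn, he] using congrFun h.2 e

def HasTableTransitionsAt {I O : Type*} (E : Set (CS I O)) (f : TS I O → Option (O → ℝ≥0∞))
    (H : DetMDP (O × (CS I O → Option (O → ℝ≥0∞))) I O) (s : Trace I O) : Prop :=
  ∀ (i : I) (o : O) (r : CS I O → Option (O → ℝ≥0∞)),
    H.trans (stateOf E f s) i (o, r) =
      if r = rowOn E f (extT s i o) then probOf f (traceInput s i) o else 0

section Hypothesis

variable {I O : Type*} {E : Set (CS I O)} {f : TS I O → Option (O → ℝ≥0∞)}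
  {H : DetMDP (O × (CS I O → Option (O → ℝ≥0∞))) I O} {s : Trace I O}

lemma outDist_stateOf (hL : ∀ p, H.lab p = p.1)
    (hδ : HasTableTransitionsAt E f H s) (i : I) :
    H.outDist (stateOf E f s) i = probOf f (traceInput s i) := by
  funext o
  have hmass : ∀ p : O × (CS I O → Option (O → ℝ≥0∞)),
      (if H.lab p = o then H.trans (stateOf E f s) i p else 0) =
        if p = (o, rowOn E f (extT s i o)) then probOf f (traceInput s i) o else 0 := by
    rintro ⟨o', r⟩
    rw [hL, hδ]
    by_cases ho : o' = o <;> simp [ho]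
  simp only [DetMDP.outDist, hmass, tsum_ite_eq]

lemma step_stateOf (hL : ∀ p, H.lab p = p.1)
    (hδ : HasTableTransitionsAt E f H s) (i : I) (o : O) :
    H.step (stateOf E f s) i o =
      if 0 < probOf f (traceInput s i) o then some (stateOf E f (extT s i o)) else none := by
  split_ifs with hp
  · have hstate : stateOf E f (extT s i o) = (o, rowOn E f (extT s i o)) := by
      rw [stateOf, lastOut_extT]
    have htrans : 0 < H.trans (stateOf E f s) i (stateOf E f (extT s i o)) := by
      rwa [hstate, hδ, if_pos rfl]
    simpa [hL, hstate] using H.step_eq_some htrans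
  · rw [H.step_eq_none_iff, outDist_stateOf hL hδ]
    exact nonpos_iff_eq_zero.mp (not_lt.mp hp)

lemma dstar_extT_of_dstar_eq_stateOf (hL : ∀ p, H.lab p = p.1)
    (hδ : HasTableTransitionsAt E f H s)
    (hs : H.dstar s = some (stateOf E f s)) (i : I) (o : O) :
    H.dstar (extT s i o) =
      if 0 < probOf f (traceInput s i) o then some (stateOf E f (extT s i o)) else none := by
  rw [H.dstar_extT, hs, Option.bind_some, step_stateOf hL hδ]

end Hypothesis

section Table

variable {Q I O : Type*} {M : DetMDP Q I O} {S : Set (Trace I O)} {E : Set (CS I O)}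
  {H : DetMDP (O × (CS I O → Option (O → ℝ≥0∞))) I O}

lemma dstar_eq_stateOf_of_mem (hSpc : ∀ t ∈ S, ∀ t', tracePrefix t' t → t' ∈ S)
    (hobs : ∀ s ∈ S, M.dstar s ≠ none)
    (hq0 : H.q0 = stateOf E M.sem ((M.lab M.q0, []) : Trace I O)) (hL : ∀ p, H.lab p = p.1)
    (hδ : ∀ s ∈ S, HasTableTransitionsAt E M.sem H s) :
    ∀ s ∈ S, H.dstar s = some (stateOf E M.sem s) := by
  rintro ⟨o, l⟩ hs
  induction l using List.reverseRecOn with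
  | nil =>
    obtain rfl : M.lab M.q0 = o := M.lab_q0_eq_of_dstar_ne_none (hobs _ hs)
    rw [DetMDP.dstar, if_pos (by rw [hq0, hL]; rfl), hq0]
    rfl
  | append_singleton l x ih =>
    obtain ⟨i, o'⟩ := x
    have hs' : ((o, l) : Trace I O) ∈ S := hSpc _ hs _ ⟨rfl, List.prefix_append _ _⟩
    have hp : 0 < probOf M.sem (traceInput (o, l) i) o' :=
      pos_iff_ne_zero.mpr fun h => hobs _ hs ((M.dstar_extT_eq_none_iff _ i o').mpr h)
    exact (dstar_extT_of_dstar_eq_stateOf hL (hδ _ hs') (ih hs') i o').trans (if_pos hp)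

lemma sem_traceCS_eq_of_inLt (hclosed : ClosedTable E M.sem S) (hL : ∀ p, H.lab p = p.1)
    (hδ : ∀ s ∈ S, HasTableTransitionsAt E M.sem H s)
    (hreach : ∀ s ∈ S, H.dstar s = some (stateOf E M.sem s)) {e : CS I O} (he : e ∈ E)
    (hshort : ∀ s ∈ S, M.sem (traceCS s e) = H.sem (traceCS s e))
    {l : Trace I O} (hl : inLt M.sem S l) : M.sem (traceCS l e) = H.sem (traceCS l e) := by
  obtain ⟨s, hs, i, o, rfl, hp⟩ := hl
  obtain ⟨s', hs', hrow⟩ := hclosed _ ⟨s, hs, i, o, rfl, hp⟩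
  have hH : H.dstar (extT s i o) = H.dstar s' := by
    rw [dstar_extT_of_dstar_eq_stateOf hL (hδ s hs) (hreach s hs), if_pos hp,
      stateOf_eq_of_eqRow hrow, hreach s' hs']
  rw [hrow.apply_traceCS_eq he, H.sem_traceCS_congr hH, hshort s' hs']

lemma sem_traceCS_eq_of_mem
    (hEsc : ∀ (i : I) (o : O) (i' : I) (l : List (O × I)), (i, (o, i') :: l) ∈ E → (i', l) ∈ E)
    (hobs : ∀ s ∈ S, M.dstar s ≠ none) (hclosed : ClosedTable E M.sem S)
    (hL : ∀ p, H.lab p = p.1) (hδ : ∀ s ∈ S, HasTableTransitionsAt E M.sem H s)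
    (hreach : ∀ s ∈ S, H.dstar s = some (stateOf E M.sem s)) :
    ∀ e ∈ E, ∀ s ∈ S, M.sem (traceCS s e) = H.sem (traceCS s e) := by
  rintro ⟨i, l⟩ he
  induction l generalizing i with
  | nil =>
    intro s hs
    obtain ⟨q, hq⟩ := Option.ne_none_iff_exists'.mp (hobs s hs)
    rw [traceCS_nil, M.sem_traceInput, H.sem_traceInput, hq, hreach s hs, Option.map_some,
      Option.map_some, outDist_stateOf hL (hδ s hs), M.probOf_sem_traceInput hq]
  | cons x l ih =>
    obtain ⟨o, i'⟩ := x
    have he' : ((i', l) : CS I O) ∈ E := hEsc i o i' l he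
    intro s hs
    rw [traceCS_cons]
    by_cases hp : 0 < probOf M.sem (traceInput s i) o
    · exact sem_traceCS_eq_of_inLt hclosed hL hδ hreach he' (ih i' he') ⟨s, hs, i, o, rfl, hp⟩
    · have hM : M.dstar (extT s i o) = none :=
        (M.dstar_extT_eq_none_iff s i o).mpr (nonpos_iff_eq_zero.mp (not_lt.mp hp))
      have hH : H.dstar (extT s i o) = none := by
        rw [dstar_extT_of_dstar_eq_stateOf hL (hδ s hs) (hreach s hs), if_neg hp]
      rw [M.sem_traceCS_of_dstar_eq_none hM, H.sem_traceCS_of_dstar_eq_none hH]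

end Table

theorem hypothesis_consistent_with_table_general {Q I O : Type*} (M : DetMDP Q I O)
    (S : Set (Trace I O)) (E : Set (CS I O))
    (H : DetMDP (O × (CS I O → Option (O → ℝ≥0∞))) I O)
    (hSpc : ∀ t ∈ S, ∀ t', tracePrefix t' t → t' ∈ S)
    (hEsc : ∀ (i : I) (ts : List (O × I)), ((i, ts) : CS I O) ∈ E →
      ∀ (o' : O) (i' : I) (l2 : List (O × I)), ((o', i') :: l2) <:+ ts → ((i', l2) : CS I O) ∈ E)
    (hrows : ∀ s ∈ S, ∀ i : I, M.sem (traceInput s i) ≠ none)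
    (hclosed : ClosedTable E M.sem S)
    (hq0 : H.q0 = stateOf E M.sem ((M.lab M.q0, []) : Trace I O))
    (hL : ∀ p, H.lab p = p.1)
    (hδ : ∀ s ∈ S, ∀ (i : I) (o : O) (r : CS I O → Option (O → ℝ≥0∞)),
      H.trans (stateOf E M.sem s) i (o, r) =
        if r = rowOn E M.sem (extT s i o) then probOf M.sem (traceInput s i) o else 0) :
    ∀ s : Trace I O, (s ∈ S ∨ inLt M.sem S s) → ∀ e ∈ E,
      M.sem (traceCS s e) = H.sem (traceCS s e) := by
  intro s hs e he
  have hobs : ∀ s ∈ S, M.dstar s ≠ none := fun s hs h =>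
    hrows s hs e.1 (by rw [M.sem_traceInput, h, Option.map_none])
  have hreach := dstar_eq_stateOf_of_mem hSpc hobs hq0 hL hδ
  have hshort := sem_traceCS_eq_of_mem
    (fun i o i' l he => hEsc i _ he o i' l (List.suffix_refl _)) hobs hclosed hL hδ hreach e he
  rcases hs with hs | hl
  · exact hshort s hs
  · exact sem_traceCS_eq_of_inLt hclosed hL hδ hreach he hshort hl

/-- A hypothesis MDP derived from a closed and consistent exact
observation table is consistent with the table: for every `s ∈ S ∪ Lt(S)` and
`e ∈ E`, `T(s·e) = H(s·e)`. -/
theorem hypothesis_consistent_with_table {Q I O : Type*} (M : DetMDP Q I O)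
    (S : Set (Trace I O)) (E : Set (CS I O))
    (H : DetMDP (O × (CS I O → Option (O → ℝ≥0∞))) I O)
    (hSpc : ∀ t ∈ S, ∀ t', tracePrefix t' t → t' ∈ S)
    (hS0 : ((M.lab M.q0, []) : Trace I O) ∈ S)
    (hE : ∀ i : I, ((i, []) : CS I O) ∈ E)
    (hEsc : ∀ (i : I) (ts : List (O × I)), ((i, ts) : CS I O) ∈ E →
      ∀ (o' : O) (i' : I) (l2 : List (O × I)), ((o', i') :: l2) <:+ ts → ((i', l2) : CS I O) ∈ E)
    (hrows : ∀ s ∈ S, ∀ i : I, M.sem (traceInput s i) ≠ none)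
    (hclosed : ClosedTable E M.sem S)
    (hconsistent : ConsistentTable E M.sem S)
    (hq0 : H.q0 = stateOf E M.sem ((M.lab M.q0, []) : Trace I O))
    (hL : ∀ p, H.lab p = p.1)
    (hδ : ∀ s ∈ S, ∀ (i : I) (o : O) (r : CS I O → Option (O → ℝ≥0∞)),
      H.trans (stateOf E M.sem s) i (o, r) =
        if r = rowOn E M.sem (extT s i o) then probOf M.sem (traceInput s i) o else 0) :
    ∀ s : Trace I O, (s ∈ S ∨ inLt M.sem S s) → ∀ e ∈ E,
      M.sem (traceCS s e) = H.sem (traceCS s e) :=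
  hypothesis_consistent_with_table_general M S E H hSpc hEsc hrows hclosed hq0 hL hδ
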